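/- Let M ⊆ B(H,K) be a ternary ring of operators such that I_H lies in the norm-closed linear span of M*M := {m*n : m,n ∈ M} and I_K lies in the norm-closed linear span of MM*. Let S ⊆ B(H) and T ⊆ B(K) be norm-closed subspaces with M S M* ⊆ T and M* T M ⊆ S. Then S equals the norm-closed linear span of M* T M and T equals the norm-closed linear span of M S M*. -/

import Mathlib

/-!
Approximating the identity by elements `x, y` of the span of `M*M`, every `s ∈ S` is a norm
limit of the products `x s y`, and by bilinearity these lie in the span of the elements
`(m* n) s (m'* n') = m* (n s m'*) n'`, which belong to `M* T M` because `n s m'* ∈ T`.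
The same argument with the roles of `H` and `K` exchanged gives the statement for `T`.
-/

open ContinuousLinearMap
open scoped Pointwise

theorem mem_topologicalClosure_span_mul_mul {R A : Type*} [CommSemiring R] [Semiring A]
    [Algebra R A] [TopologicalSpace A] [IsTopologicalSemiring A] [ContinuousConstSMul R A]
    {P : Set A} (hP : (1 : A) ∈ (Submodule.span R P).topologicalClosure) (a : A) :
    a ∈ (Submodule.span R (P * {a} * P)).topologicalClosure := by
  have hmem : ∀ x ∈ (Submodule.span R P : Set A), ∀ y ∈ (Submodule.span R P : Set A),
      x * a * y ∈ (Submodule.span R (P * {a} * P) : Set A) := by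
    intro x hx y hy
    rw [← Submodule.span_mul_span, ← Submodule.span_mul_span]
    exact Submodule.mul_mem_mul (Submodule.mul_mem_mul hx (Submodule.subset_span rfl)) hy
  rw [← SetLike.mem_coe, Submodule.topologicalClosure_coe]
  simpa only [mul_one, one_mul] using
    map_mem_closure₂ (f := fun x y => x * a * y) (by fun_prop) hP hP hmem

theorem Submodule.eq_topologicalClosure_span_of_mul_mul_mem {R A : Type*} [CommSemiring R]
    [Semiring A] [Algebra R A] [TopologicalSpace A] [IsTopologicalSemiring A]
    [ContinuousConstSMul R A] {P G : Set A} {S : Submodule R A} (hS : IsClosed (S : Set A))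
    (hP : (1 : A) ∈ (Submodule.span R P).topologicalClosure)
    (hPSP : ∀ p ∈ P, ∀ s ∈ S, ∀ q ∈ P, p * s * q ∈ G) (hG : G ⊆ S) :
    S = (Submodule.span R G).topologicalClosure := by
  refine le_antisymm (fun s hs => ?_) (topologicalClosure_minimal _ (span_le.2 hG) hS)
  refine topologicalClosure_mono (span_mono ?_) (mem_topologicalClosure_span_mul_mul hP s)
  rintro _ ⟨_, ⟨p, hp, b, hb, rfl⟩, q, hq, rfl⟩
  rw [Set.mem_singleton_iff.mp hb]
  exact hPSP p hp s hs q hq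

theorem stmt_5_general {H K : Type*}
    [NormedAddCommGroup H] [InnerProductSpace ℂ H] [CompleteSpace H]
    [NormedAddCommGroup K] [InnerProductSpace ℂ K] [CompleteSpace K]
    (M : Submodule ℂ (H →L[ℂ] K))
    (hIH : ContinuousLinearMap.id ℂ H ∈
      (Submodule.span ℂ {x | ∃ m ∈ M, ∃ n ∈ M, x = adjoint m ∘L n}).topologicalClosure)
    (hIK : ContinuousLinearMap.id ℂ K ∈
      (Submodule.span ℂ {x | ∃ m ∈ M, ∃ n ∈ M, x = m ∘L adjoint n}).topologicalClosure)
    (S : Submodule ℂ (H →L[ℂ] H)) (hSclosed : IsClosed (S : Set (H →L[ℂ] H)))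
    (T : Submodule ℂ (K →L[ℂ] K)) (hTclosed : IsClosed (T : Set (K →L[ℂ] K)))
    (hMSM : ∀ m ∈ M, ∀ n ∈ M, ∀ s ∈ S, (m ∘L s) ∘L adjoint n ∈ T)
    (hMTM : ∀ m ∈ M, ∀ n ∈ M, ∀ t ∈ T, (adjoint m ∘L t) ∘L n ∈ S) :
    S = (Submodule.span ℂ
          {x | ∃ m ∈ M, ∃ n ∈ M, ∃ t ∈ T, x = (adjoint m ∘L t) ∘L n}).topologicalClosure ∧
    T = (Submodule.span ℂ
          {x | ∃ m ∈ M, ∃ n ∈ M, ∃ s ∈ S, x = (m ∘L s) ∘L adjoint n}).topologicalClosure := by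
  constructor
  · refine S.eq_topologicalClosure_span_of_mul_mul_mem hSclosed hIH ?_ ?_
    · rintro _ ⟨m, hm, n, hn, rfl⟩ s hs _ ⟨m', hm', n', hn', rfl⟩
      exact ⟨m, hm, n', hn', (n ∘L s) ∘L adjoint m', hMSM n hn m' hm' s hs, by ext; simp⟩
    · rintro _ ⟨m, hm, n, hn, t, ht, rfl⟩
      exact hMTM m hm n hn t ht
  · refine T.eq_topologicalClosure_span_of_mul_mul_mem hTclosed hIK ?_ ?_
    · rintro _ ⟨m, hm, n, hn, rfl⟩ t ht _ ⟨m', hm', n', hn', rfl⟩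
      exact ⟨m, hm, n', hn', (adjoint n ∘L t) ∘L m', hMTM n hn m' hm' t ht, by ext; simp⟩
    · rintro _ ⟨m, hm, n, hn, s, hs, rfl⟩
      exact hMSM m hm n hn s hs

/-- if `M` is a TRO with `I_H` in the norm-closed span of `M*M` and
`I_K` in the norm-closed span of `MM*`, and `S, T` are norm-closed subspaces with
`M S M* ⊆ T` and `M* T M ⊆ S`, then `S` is the norm-closed span of `M* T M` and
`T` is the norm-closed span of `M S M*`. -/
theorem stmt_5 {H K : Type*}
    [NormedAddCommGroup H] [InnerProductSpace ℂ H] [CompleteSpace H]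
    [NormedAddCommGroup K] [InnerProductSpace ℂ K] [CompleteSpace K]
    (M : Submodule ℂ (H →L[ℂ] K))
    (hM : ∀ x ∈ M, ∀ y ∈ M, ∀ z ∈ M, x ∘L (adjoint y ∘L z) ∈ M)
    (hIH : ContinuousLinearMap.id ℂ H ∈
      (Submodule.span ℂ {x | ∃ m ∈ M, ∃ n ∈ M, x = adjoint m ∘L n}).topologicalClosure)
    (hIK : ContinuousLinearMap.id ℂ K ∈
      (Submodule.span ℂ {x | ∃ m ∈ M, ∃ n ∈ M, x = m ∘L adjoint n}).topologicalClosure)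
    (S : Submodule ℂ (H →L[ℂ] H)) (hSclosed : IsClosed (S : Set (H →L[ℂ] H)))
    (T : Submodule ℂ (K →L[ℂ] K)) (hTclosed : IsClosed (T : Set (K →L[ℂ] K)))
    (hMSM : ∀ m ∈ M, ∀ n ∈ M, ∀ s ∈ S, (m ∘L s) ∘L adjoint n ∈ T)
    (hMTM : ∀ m ∈ M, ∀ n ∈ M, ∀ t ∈ T, (adjoint m ∘L t) ∘L n ∈ S) :
    S = (Submodule.span ℂ
          {x | ∃ m ∈ M, ∃ n ∈ M, ∃ t ∈ T, x = (adjoint m ∘L t) ∘L n}).topologicalClosure ∧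
    T = (Submodule.span ℂ
          {x | ∃ m ∈ M, ∃ n ∈ M, ∃ s ∈ S, x = (m ∘L s) ∘L adjoint n}).topologicalClosure :=
  stmt_5_general M hIH hIK S hSclosed T hTclosed hMSM hMTM
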